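/- Let B be a Banach space, k ∈ ℕ, and E ⊂ B a k-dimensional subspace. Then there exist unit vectors v₁, …, v_k ∈ E such that for every 1 ≤ i ≤ k, the distance from v_i to the linear span of {v_j : j < i} equals 1. -/
import Mathlib


open Metric

lemma gk_attained {B : Type*} [NormedAddCommGroup B] [NormedSpace ℝ B]
    (W : Submodule ℝ B) [FiniteDimensional ℝ W] (x : B) :
    ∃ w ∈ W, infDist x (W : Set B) = dist x w := by
  have h0 : (0 : B) ∈ W := W.zero_mem
  rw [← Metric.infDist_inter_closedBall_of_mem (x := x) h0]
  set r := dist (0 : B) x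
  have hcpt : IsCompact ((W : Set B) ∩ closedBall x r) := by
    have : ProperSpace W := FiniteDimensional.proper ℝ W
    have hS : IsCompact ((Subtype.val : W → B) ⁻¹' closedBall x r) := by
      apply Metric.isCompact_of_isClosed_isBounded
      · exact Metric.isClosed_closedBall.preimage continuous_subtype_val
      · rw [Metric.isBounded_iff]
        refine ⟨r + r, fun a ha b hb => ?_⟩
        have : dist (a : B) (b : B) ≤ r + r :=
          (dist_triangle (a:B) x (b:B)).trans
            (by have ha' := mem_closedBall.mp ha; have hb' := mem_closedBall.mp hb; rw [dist_comm x (b:B)]; exact add_le_add ha' hb')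
        simpa [Subtype.dist_eq] using this
    have h2 := hS.image continuous_subtype_val
    convert h2 using 1
    ext y
    constructor
    · rintro ⟨hyW, hyB⟩; exact ⟨⟨y, hyW⟩, hyB, rfl⟩
    · rintro ⟨⟨z, hz⟩, hzB, rfl⟩; exact ⟨hz, hzB⟩
  obtain ⟨w, ⟨hwW, _⟩, hw⟩ := hcpt.exists_infDist_eq_dist ⟨0, h0, by simp [r, dist_comm]⟩ x
  exact ⟨w, hwW, hw⟩

lemma gk_step {B : Type*} [NormedAddCommGroup B] [NormedSpace ℝ B]
    (E W : Submodule ℝ B) [FiniteDimensional ℝ W] (x : B) (hxE : x ∈ E) (hxW : x ∉ W)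
    (hWE : W ≤ E) :
    ∃ u ∈ E, ‖u‖ = 1 ∧ infDist u (W : Set B) = 1 := by
  have hWcl : IsClosed (W : Set B) := Submodule.closed_of_finiteDimensional W
  set d := infDist x (W : Set B) with hd
  have hdpos : 0 < d := (hWcl.notMem_iff_infDist_pos ⟨0, W.zero_mem⟩).mp hxW
  obtain ⟨w₀, hw₀, hw₀d⟩ := gk_attained W x
  refine ⟨d⁻¹ • (x - w₀), E.smul_mem _ (E.sub_mem hxE (hWE hw₀)), ?_, ?_⟩
  · rw [norm_smul, norm_inv, Real.norm_eq_abs, abs_of_pos hdpos, ← dist_eq_norm, ← hw₀d]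
    exact inv_mul_cancel₀ hdpos.ne'
  · refine le_antisymm ?_ ?_
    · have h := infDist_le_dist_of_mem (x := d⁻¹ • (x - w₀)) W.zero_mem
      rw [dist_zero_right, norm_smul, norm_inv, Real.norm_eq_abs, abs_of_pos hdpos,
        ← dist_eq_norm, ← hw₀d, inv_mul_cancel₀ hdpos.ne'] at h
      exact h
    · rw [← not_lt]
      intro hlt
      obtain ⟨y, hy, hdy⟩ := (infDist_lt_iff ⟨0, W.zero_mem⟩).mp hlt
      refine absurd hdy (not_lt.mpr ?_)
      · 
        have hmem : w₀ + d • y ∈ W := W.add_mem hw₀ (W.smul_mem _ hy)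
        have h1 : d ≤ dist x (w₀ + d • y) := infDist_le_dist_of_mem hmem
        have heq : dist (d⁻¹ • (x - w₀)) y = d⁻¹ * dist x (w₀ + d • y) := by
          rw [dist_eq_norm, dist_eq_norm]
          rw [show d⁻¹ • (x - w₀) - y = d⁻¹ • (x - (w₀ + d • y)) by
            rw [smul_sub, smul_sub, smul_add, smul_smul, inv_mul_cancel₀ hdpos.ne', one_smul]; abel]
          rw [norm_smul, norm_inv, Real.norm_eq_abs, abs_of_pos hdpos]
        rw [heq]
        calc (1:ℝ) = d⁻¹ * d := (inv_mul_cancel₀ hdpos.ne').symm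
          _ ≤ d⁻¹ * dist x (w₀ + d • y) := by
              exact mul_le_mul_of_nonneg_left h1 (inv_nonneg.mpr hdpos.le)

lemma gk_img1 {B : Type*} {n : ℕ} (v : Fin n → B) (u : B) (j : Fin n) :
    (Fin.snoc v u : Fin (n+1) → B) '' {j' : Fin (n+1) | j' < Fin.castSucc j}
      = v '' {j' : Fin n | j' < j} := by
  ext y
  constructor
  · rintro ⟨j', hj', rfl⟩
    have hne : j' ≠ Fin.last n := by
      intro h; rw [h] at hj'
      exact absurd hj' (not_lt.mpr (Fin.le_last _))
    obtain ⟨j'', rfl⟩ := Fin.exists_castSucc_eq.mpr hne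
    refine ⟨j'', ?_, by simp [Fin.snoc_castSucc]⟩
    exact Fin.castSucc_lt_castSucc_iff.mp hj'
  · rintro ⟨j'', hj'', rfl⟩
    exact ⟨Fin.castSucc j'', Fin.castSucc_lt_castSucc_iff.mpr hj'', by simp [Fin.snoc_castSucc]⟩

lemma gk_img2 {B : Type*} {n : ℕ} (v : Fin n → B) (u : B) :
    (Fin.snoc v u : Fin (n+1) → B) '' {j' : Fin (n+1) | j' < Fin.last n} = Set.range v := by
  ext y
  constructor
  · rintro ⟨j', hj', rfl⟩
    obtain ⟨j'', rfl⟩ := Fin.exists_castSucc_eq.mpr (Fin.lt_last_iff_ne_last.mp hj')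
    exact ⟨j'', by simp [Fin.snoc_castSucc]⟩
  · rintro ⟨j'', rfl⟩
    exact ⟨Fin.castSucc j'', Fin.castSucc_lt_last _, by simp [Fin.snoc_castSucc]⟩




/-- Gohberg–Klein lemma: in a `k`-dimensional subspace `E` of a Banach space one
can choose unit vectors `v₁, …, v_k` such that each `v_i` has distance exactly `1`
to the linear span of the previous ones. -/
theorem stmt9 {B : Type*} [NormedAddCommGroup B] [NormedSpace ℝ B]
    (k : ℕ) (E : Submodule ℝ B) [FiniteDimensional ℝ E]
    (hdim : Module.finrank ℝ E = k) :
    ∃ v : Fin k → B, (∀ i, v i ∈ E) ∧ (∀ i, ‖v i‖ = 1) ∧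
      ∀ i : Fin k,
        Metric.infDist (v i)
          ((Submodule.span ℝ (v '' {j : Fin k | j < i}) : Submodule ℝ B) : Set B) = 1 := by
  suffices h : ∀ n, n ≤ k → ∃ v : Fin n → B, (∀ i, v i ∈ E) ∧ (∀ i, ‖v i‖ = 1) ∧
      ∀ i : Fin n,
        Metric.infDist (v i)
          ((Submodule.span ℝ (v '' {j : Fin n | j < i}) : Submodule ℝ B) : Set B) = 1 from
    h k le_rfl
  intro n
  induction n with
  | zero => exact fun _ => ⟨Fin.elim0, fun i => i.elim0, fun i => i.elim0, fun i => i.elim0⟩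
  | succ n ih =>
    intro hnk
    obtain ⟨v, hvE, hvn, hvd⟩ := ih (Nat.le_of_succ_le hnk)
    set W : Submodule ℝ B := Submodule.span ℝ (Set.range v) with hW
    have hWfin : FiniteDimensional ℝ W := FiniteDimensional.span_of_finite ℝ (Set.finite_range v)
    have hWE : W ≤ E := Submodule.span_le.mpr (Set.range_subset_iff.mpr hvE)
    have hrank : Module.finrank ℝ W ≤ n := by
      classical
      refine (finrank_span_le_card _).trans ?_
      have := Fintype.card_range_le v
      rw [Set.toFinset_card]
      simpa using this
    have hWlt : W < E := by
      refine lt_of_le_of_ne hWE ?_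
      intro h
      rw [h, hdim] at hrank
      omega
    obtain ⟨x, hxE, hxW⟩ := SetLike.exists_of_lt hWlt
    obtain ⟨u, huE, hun, hud⟩ := gk_step E W x hxE hxW hWE
    refine ⟨Fin.snoc v u, ?_, ?_, ?_⟩
    · intro i
      refine Fin.lastCases ?_ ?_ i
      · simpa using huE
      · intro j; simpa using hvE j
    · intro i
      refine Fin.lastCases ?_ ?_ i
      · simpa using hun
      · intro j; simpa using hvn j
    · intro i
      refine Fin.lastCases ?_ ?_ i
      · rw [gk_img2, Fin.snoc_last, ← hW]
        exact hud
      · intro j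
        rw [gk_img1, Fin.snoc_castSucc]
        exact hvd j
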